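/- arXiv:2402.00946 — 5 statements merged into one kernel-verified Lean document; each statement's English description precedes it below -/
import Mathlib

section
/- Let S be a union of m pairwise disjoint cells of measure h^2, and suppose a family V of functions satisfies the inverse stability property: ‖v − ṽ‖_{L^1(S)} ≤ C h^2 Σ_{T∈S} |a_T(v) − a_T(ṽ)| for all v, ṽ ∈ V. If ũ ∈ V minimizes the ℓ^2 norm of the average discrepancy, i.e., Σ_{T∈S}|a_T(ũ)−a_T(u)|^2 ≤ Σ_{T∈S}|a_T(v)−a_T(u)|^2 for all v ∈ V, then ‖u − ũ‖_{L^1(S)} ≤ (1 + 2C√m) · inf_{v∈V} ‖u − v‖_{L^1(S)}. -/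
/-!
Fix `v ∈ V`. By the triangle inequality and inverse stability,
`‖u - ũ‖ ≤ ‖u - v‖ + C h² Σ_T |a_T(v) - a_T(ũ)|`. On the cell averages, Cauchy–Schwarz together
with the ℓ²-minimality of `ũ` gives `Σ_T |a_T(v) - a_T(ũ)| ≤ 2√m Σ_T |a_T(v) - a_T(u)|`, and
`h² |a_T(v) - a_T(u)| ≤ ‖u - v‖_{L¹(T)}` cell by cell. Taking the infimum over `v` concludes.
-/

open MeasureTheory

/-- The cell average `a_T(v) = (1/h²) ∫_T v`. -/
noncomputable def cellAvg (h : ℝ) (T : Set (ℝ × ℝ)) (v : ℝ × ℝ → ℝ) : ℝ :=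
  (1 / h ^ 2) * ∫ x in T, v x

theorem Finset.sum_le_sqrt_card_mul_sqrt_sum_sq {ι : Type*} (s : Finset ι) (f : ι → ℝ) :
    ∑ i ∈ s, f i ≤ √(s.card : ℝ) * √(∑ i ∈ s, f i ^ 2) := by
  rw [← Real.sqrt_mul (Nat.cast_nonneg _)]
  exact (le_abs_self _).trans (Real.abs_le_sqrt sq_sum_le_card_mul_sum_sq)

theorem Finset.sqrt_sum_sq_le_sum_of_nonneg {ι : Type*} {s : Finset ι} {f : ι → ℝ}
    (hf : ∀ i ∈ s, 0 ≤ f i) : √(∑ i ∈ s, f i ^ 2) ≤ ∑ i ∈ s, f i :=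
  (Real.sqrt_le_left (Finset.sum_nonneg hf)).2 (Finset.sum_sq_le_sq_sum_of_nonneg hf)

theorem Finset.sum_abs_sub_le_two_sqrt_card_mul_of_sum_sq_le {ι : Type*} (s : Finset ι)
    {a b c : ι → ℝ} (hmin : ∑ i ∈ s, |b i - c i| ^ 2 ≤ ∑ i ∈ s, |a i - c i| ^ 2) :
    ∑ i ∈ s, |a i - b i| ≤ 2 * √(s.card : ℝ) * ∑ i ∈ s, |a i - c i| := by
  have hsqrt : √(∑ i ∈ s, |a i - c i| ^ 2) ≤ ∑ i ∈ s, |a i - c i| :=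
    Finset.sqrt_sum_sq_le_sum_of_nonneg fun _ _ => abs_nonneg _
  calc ∑ i ∈ s, |a i - b i|
      ≤ ∑ i ∈ s, |a i - c i| + ∑ i ∈ s, |b i - c i| := by
        rw [← Finset.sum_add_distrib]
        gcongr with i
        exact (abs_sub_le _ _ _).trans_eq (by rw [abs_sub_comm (c i)])
    _ ≤ √(s.card : ℝ) * √(∑ i ∈ s, |a i - c i| ^ 2) +
          √(s.card : ℝ) * √(∑ i ∈ s, |a i - c i| ^ 2) := by
        gcongr
        · exact s.sum_le_sqrt_card_mul_sqrt_sum_sq _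
        · exact (s.sum_le_sqrt_card_mul_sqrt_sum_sq _).trans (by gcongr)
    _ ≤ 2 * √(s.card : ℝ) * ∑ i ∈ s, |a i - c i| := by
        rw [← two_mul, mul_assoc]
        gcongr

theorem integral_abs_sub_le_add {α : Type*} [MeasurableSpace α] {μ : Measure α}
    {f g k : α → ℝ} (hf : Integrable f μ) (hg : Integrable g μ) (hk : Integrable k μ) :
    ∫ x, |f x - k x| ∂μ ≤ ∫ x, |f x - g x| ∂μ + ∫ x, |g x - k x| ∂μ := by
  refine (integral_mono (hf.sub hk).abs ((hf.sub hg).abs.add (hg.sub hk).abs)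
    fun x => abs_sub_le (f x) (g x) (k x)).trans_eq ?_
  exact integral_add (hf.sub hg).abs (hg.sub hk).abs

theorem sq_mul_abs_cellAvg_sub_le {h : ℝ} (hh : h ≠ 0) {T : Set (ℝ × ℝ)} {u v : ℝ × ℝ → ℝ}
    (hu : IntegrableOn u T) (hv : IntegrableOn v T) :
    h ^ 2 * |cellAvg h T v - cellAvg h T u| ≤ ∫ x in T, |u x - v x| := by
  have hcell : h ^ 2 * |cellAvg h T v - cellAvg h T u| = |∫ x in T, (v x - u x)| := by
    rw [cellAvg, cellAvg, integral_sub hv hu, ← mul_sub, abs_mul, ← mul_assoc,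
      abs_of_pos (by positivity), mul_one_div_cancel (pow_ne_zero 2 hh), one_mul]
  rw [hcell]
  simp_rw [abs_sub_comm (u _)]
  exact abs_integral_le_integral_abs

theorem sq_mul_sum_abs_cellAvg_sub_le {h : ℝ} (hh : h ≠ 0) {S : Finset (Set (ℝ × ℝ))}
    (hmeas : ∀ T ∈ S, MeasurableSet T) (hdisj : (S : Set (Set (ℝ × ℝ))).Pairwise Disjoint)
    {u v : ℝ × ℝ → ℝ} (hu : IntegrableOn u (⋃ T ∈ S, T)) (hv : IntegrableOn v (⋃ T ∈ S, T)) :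
    h ^ 2 * ∑ T ∈ S, |cellAvg h T v - cellAvg h T u| ≤ ∫ x in ⋃ T ∈ S, T, |u x - v x| := by
  have hsub : ∀ T ∈ S, T ⊆ ⋃ T ∈ S, T := fun _ hT _ hx => Set.mem_biUnion hT hx
  rw [integral_biUnion_finset (f := fun x => |u x - v x|) S hmeas hdisj
    fun T hT => ((hu.sub hv).mono_set (hsub T hT)).abs, Finset.mul_sum]
  exact Finset.sum_le_sum fun T hT =>
    sq_mul_abs_cellAvg_sub_le hh (hu.mono_set (hsub T hT)) (hv.mono_set (hsub T hT))

theorem stmt2_general (h : ℝ) (hh : 0 < h) (S : Finset (Set (ℝ × ℝ)))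
    (hmeas : ∀ T ∈ S, MeasurableSet T)
    (hdisj : (S : Set (Set (ℝ × ℝ))).Pairwise Disjoint)
    (C : ℝ) (hC : 0 < C)
    (V : Set ((ℝ × ℝ) → ℝ))
    (u : (ℝ × ℝ) → ℝ) (hu : IntegrableOn u (⋃ T ∈ S, T))
    (hVint : ∀ v ∈ V, IntegrableOn v (⋃ T ∈ S, T))
    (hstab : ∀ v ∈ V, ∀ w ∈ V,
      ∫ x in (⋃ T ∈ S, T), |v x - w x| ≤
        C * h ^ 2 * ∑ T ∈ S, |cellAvg h T v - cellAvg h T w|)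
    (utilde : (ℝ × ℝ) → ℝ) (hutilde : utilde ∈ V)
    (hmin : ∀ v ∈ V, ∑ T ∈ S, |cellAvg h T utilde - cellAvg h T u| ^ 2 ≤
      ∑ T ∈ S, |cellAvg h T v - cellAvg h T u| ^ 2) :
    ∫ x in (⋃ T ∈ S, T), |u x - utilde x| ≤
      (1 + 2 * C * Real.sqrt S.card) *
        ⨅ v : V, ∫ x in (⋃ T ∈ S, T), |u x - (v : (ℝ × ℝ) → ℝ) x| := by
  have : Nonempty V := ⟨⟨utilde, hutilde⟩⟩
  rw [Real.mul_iInf_of_nonneg (by positivity)]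
  refine le_ciInf fun ⟨v, hv⟩ => ?_
  have hcells := sq_mul_sum_abs_cellAvg_sub_le hh.ne' hmeas hdisj hu (hVint v hv)
  have hdiscrete := S.sum_abs_sub_le_two_sqrt_card_mul_of_sum_sq_le (hmin v hv)
  calc ∫ x in ⋃ T ∈ S, T, |u x - utilde x|
      ≤ (∫ x in ⋃ T ∈ S, T, |u x - v x|) + ∫ x in ⋃ T ∈ S, T, |v x - utilde x| :=
        integral_abs_sub_le_add hu (hVint v hv) (hVint utilde hutilde)
    _ ≤ (∫ x in ⋃ T ∈ S, T, |u x - v x|) +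
          2 * C * √(S.card : ℝ) * (h ^ 2 * ∑ T ∈ S, |cellAvg h T v - cellAvg h T u|) := by
        grw [hstab v hv utilde hutilde, hdiscrete]
        exact le_of_eq (by ring)
    _ ≤ (1 + 2 * C * √(S.card : ℝ)) * ∫ x in ⋃ T ∈ S, T, |u x - v x| := by
        grw [hcells]
        exact le_of_eq (by ring)

/-- If a family `V` satisfies the inverse stability property on a stencil `S` of `m` cells
of measure `h²`, and `utilde ∈ V` minimizes the `ℓ²` norm of the average discrepancy with `u`,
then `‖u − utilde‖_{L¹(S)} ≤ (1 + 2C√m) · inf_{v∈V} ‖u − v‖_{L¹(S)}`. -/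
theorem stmt2 (h : ℝ) (hh : 0 < h) (S : Finset (Set (ℝ × ℝ)))
    (hmeas : ∀ T ∈ S, MeasurableSet T)
    (hvol : ∀ T ∈ S, volume T = ENNReal.ofReal (h ^ 2))
    (hdisj : (S : Set (Set (ℝ × ℝ))).Pairwise Disjoint)
    (C : ℝ) (hC : 0 < C)
    (V : Set ((ℝ × ℝ) → ℝ)) (hV : V.Nonempty)
    (u : (ℝ × ℝ) → ℝ) (hu : IntegrableOn u (⋃ T ∈ S, T))
    (hVint : ∀ v ∈ V, IntegrableOn v (⋃ T ∈ S, T))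
    (hstab : ∀ v ∈ V, ∀ w ∈ V,
      ∫ x in (⋃ T ∈ S, T), |v x - w x| ≤
        C * h ^ 2 * ∑ T ∈ S, |cellAvg h T v - cellAvg h T w|)
    (utilde : (ℝ × ℝ) → ℝ) (hutilde : utilde ∈ V)
    (hmin : ∀ v ∈ V, ∑ T ∈ S, |cellAvg h T utilde - cellAvg h T u| ^ 2 ≤
      ∑ T ∈ S, |cellAvg h T v - cellAvg h T u| ^ 2) :
    ∫ x in (⋃ T ∈ S, T), |u x - utilde x| ≤
      (1 + 2 * C * Real.sqrt S.card) *
        ⨅ v : V, ∫ x in (⋃ T ∈ S, T), |u x - (v : (ℝ × ℝ) → ℝ) x| :=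
  stmt2_general h hh S hmeas hdisj C hC V u hu hVint hstab utilde hutilde hmin
end

section
/- Given n+1 adjacent intervals I_i = [x_0 + ih, x_0 + (i+1)h], i = 0,…,n, with h > 0, and any prescribed values c_0,…,c_n ∈ ℝ, there exists a unique polynomial p of degree at most n such that (1/h)∫_{I_i} p(x) dx = c_i for all i. In other words, the linear map from polynomials of degree ≤ n to ℝ^{n+1} given by the averages over the n+1 intervals is a linear isomorphism. -/
/-!
The averaging map from polynomials of degree `≤ n` to `ℝ^{n+1}` is a linear map between spaces of
the same dimension, so it suffices to show it is injective. If all `n+1` averages of `p` vanish, an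
antiderivative `P` of `p` (of degree `≤ n+1`) takes the same value at the `n+2` endpoints
`x₀ + ih`; hence `P` is constant and `p = P' = 0`.
-/

open Polynomial intervalIntegral

namespace Polynomial

theorem exists_derivative_eq {K : Type*} [Field K] [CharZero K] (p : K[X]) :
    ∃ P : K[X], P.natDegree ≤ p.natDegree + 1 ∧ derivative P = p := by
  refine ⟨p.sum fun n a => monomial (n + 1) (a / (n + 1)), ?_, ?_⟩
  · refine natDegree_sum_le_of_forall_le _ _ fun n hn => (natDegree_monomial_le _).trans ?_
    exact Nat.succ_le_succ (le_natDegree_of_mem_supp n hn)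
  · conv_rhs => rw [← p.sum_monomial_eq]
    simp only [Polynomial.sum, derivative_sum, derivative_monomial]
    refine Finset.sum_congr rfl fun n _ => ?_
    push_cast
    rw [div_mul_cancel₀ _ (Nat.cast_add_one_ne_zero n)]

theorem mem_degreeLT_succ_iff {R : Type*} [Semiring R] {n : ℕ} {p : R[X]} :
    p ∈ degreeLT R (n + 1) ↔ p.natDegree ≤ n := by
  rw [degreeLT_succ_eq_degreeLE, mem_degreeLE, natDegree_le_iff_degree_le]

theorem intervalIntegral_eval_derivative (P : ℝ[X]) (a b : ℝ) :
    ∫ x in a..b, (derivative P).eval x = P.eval b - P.eval a :=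
  integral_eq_sub_of_hasDerivAt (fun x _ => P.hasDerivAt x)
    (P.derivative.continuous.intervalIntegrable a b)

theorem eq_zero_of_intervalIntegral_eq_zero {n : ℕ} {p : ℝ[X]} (hp : p.natDegree ≤ n)
    {t : Fin (n + 2) → ℝ} (ht : Function.Injective t)
    (hint : ∀ i : Fin (n + 1), ∫ x in t i.castSucc..t i.succ, p.eval x = 0) : p = 0 := by
  obtain ⟨P, hPdeg, rfl⟩ := p.exists_derivative_eq
  have hconst : ∀ i, P.eval (t i) = P.eval (t 0) := by
    intro i
    induction i using Fin.induction with
    | zero => rfl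
    | succ i ih =>
      rw [← ih, ← sub_eq_zero, ← intervalIntegral_eval_derivative, hint i]
  have hP : P - C (P.eval (t 0)) = 0 := by
    refine eq_zero_of_natDegree_lt_card_of_eval_eq_zero _ ht (by simp [hconst]) ?_
    rw [natDegree_sub_C, Fintype.card_fin]
    omega
  rw [sub_eq_zero.mp hP, derivative_C]

noncomputable def intervalIntegralₗ (a b : ℝ) : ℝ[X] →ₗ[ℝ] ℝ where
  toFun p := ∫ x in a..b, p.eval x
  map_add' p q := by
    simpa using integral_add (p.continuous.intervalIntegrable a b)
      (q.continuous.intervalIntegrable a b)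
  map_smul' c p := by simp [integral_const_mul]

end Polynomial

noncomputable def intervalAverages (x0 h : ℝ) (n : ℕ) : ℝ[X] →ₗ[ℝ] Fin (n + 1) → ℝ :=
  LinearMap.pi fun i =>
    (1 / h) • intervalIntegralₗ (x0 + (i.1 : ℝ) * h) (x0 + ((i.1 : ℝ) + 1) * h)

theorem intervalAverages_apply (x0 h : ℝ) (n : ℕ) (p : ℝ[X]) (i : Fin (n + 1)) :
    intervalAverages x0 h n p i =
      (1 / h) * ∫ x in (x0 + (i.1 : ℝ) * h)..(x0 + ((i.1 : ℝ) + 1) * h), p.eval x :=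
  rfl

theorem intervalAverages_injective_on_degreeLT (x0 : ℝ) {h : ℝ} (hh : h ≠ 0) (n : ℕ) :
    Function.Injective ((intervalAverages x0 h n).domRestrict (degreeLT ℝ (n + 1))) := by
  rw [← LinearMap.ker_eq_bot, LinearMap.ker_eq_bot']
  rintro ⟨p, hp⟩ hzero
  refine Subtype.ext (eq_zero_of_intervalIntegral_eq_zero (mem_degreeLT_succ_iff.mp hp)
    (t := fun i => x0 + (i.1 : ℝ) * h) ?_ fun i => ?_)
  · intro i j hij
    simpa [hh, Fin.ext_iff] using hij
  · have := congrFun hzero i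
    simp only [LinearMap.domRestrict_apply, intervalAverages_apply, Pi.zero_apply, one_div,
      mul_eq_zero, inv_eq_zero, hh, false_or] at this
    simpa using this

theorem intervalAverages_bijective_on_degreeLT (x0 : ℝ) {h : ℝ} (hh : h ≠ 0) (n : ℕ) :
    Function.Bijective ((intervalAverages x0 h n).domRestrict (degreeLT ℝ (n + 1))) := by
  have hinj := intervalAverages_injective_on_degreeLT x0 hh n
  refine ⟨hinj, (LinearMap.injective_iff_surjective_of_finrank_eq_finrank ?_).mp hinj⟩
  rw [(degreeLTEquiv ℝ (n + 1)).finrank_eq]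

/-- Existence and uniqueness of the average interpolant: given `n+1` adjacent intervals
`[x₀ + ih, x₀ + (i+1)h]` with `h > 0` and prescribed values `c₀, …, c_n`, there is a unique
polynomial `p` of degree at most `n` with `(1/h)∫_{I_i} p = c_i` for all `i`. -/
theorem stmt7 (n : ℕ) (x0 h : ℝ) (hh : 0 < h) (c : Fin (n + 1) → ℝ) :
    ∃! p : Polynomial ℝ, p.natDegree ≤ n ∧
      ∀ i : Fin (n + 1),
        (1 / h) * ∫ x in (x0 + (i.1 : ℝ) * h)..(x0 + ((i.1 : ℝ) + 1) * h), p.eval x = c i := by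
  obtain ⟨⟨p, hp⟩, hpc, huniq⟩ := (intervalAverages_bijective_on_degreeLT x0 hh.ne' n).existsUnique c
  refine ⟨p, ⟨mem_degreeLT_succ_iff.mp hp, congrFun hpc⟩, fun q ⟨hq, hqc⟩ => ?_⟩
  exact congrArg Subtype.val (huniq ⟨q, mem_degreeLT_succ_iff.mpr hq⟩ (funext hqc))
end

section
/- Let v : [a, b] → ℝ be integrable over n+1 adjacent equal subintervals of [a,b], and let p be the unique polynomial of degree ≤ n matching the averages of v on these subintervals. Then p equals the derivative of the Lagrange polynomial of degree ≤ n+1 that interpolates the primitive V(x) = ∫_a^x v(t)dt at the n+2 interval endpoints. -/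
/-!
Let `P` be a polynomial antiderivative of `p`, of degree `≤ n + 1`. On each subinterval the
increment of `P` is `∫ p = ∫ v`, the increment of the primitive `V`, which is also the increment
of its interpolant `q`. Hence `P - q` takes the same value at all `n + 2` nodes; having degree
`≤ n + 1`, it is constant, and differentiating gives `p = q'`.
-/

open intervalIntegral Polynomial

namespace Polynomial

variable {K : Type*} [Field K]

noncomputable def antiderivative (p : K[X]) : K[X] :=
  p.sum fun i c => C (c / (i + 1)) * X ^ (i + 1)

theorem derivative_antiderivative [CharZero K] (p : K[X]) : derivative (antiderivative p) = p := by
  rw [antiderivative, Polynomial.sum, map_sum]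
  conv_rhs => rw [← sum_C_mul_X_pow_eq p, Polynomial.sum]
  refine Finset.sum_congr rfl fun i _ => ?_
  rw [derivative_C_mul, derivative_X_pow, ← mul_assoc, ← C_mul]
  push_cast
  rw [div_mul_cancel₀ _ (Nat.cast_add_one_ne_zero i)]

theorem natDegree_antiderivative_le (p : K[X]) :
    (antiderivative p).natDegree ≤ p.natDegree + 1 := by
  refine natDegree_sum_le_of_forall_le _ _ fun i hi => (natDegree_C_mul_le _ _).trans ?_
  simpa using le_natDegree_of_mem_supp i hi

variable {R : Type*} [CommRing R] [IsDomain R]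

theorem eq_C_of_eval_succ_eq {D : R[X]} {n : ℕ} (hD : D.natDegree ≤ n + 1) {x : ℕ → R}
    (hx : Function.Injective x) (hstep : ∀ i ≤ n, D.eval (x (i + 1)) = D.eval (x i)) :
    D = C (D.eval (x 0)) := by
  have hconst : ∀ i ≤ n + 1, D.eval (x i) = D.eval (x 0) := by
    intro i hi
    induction i with
    | zero => rfl
    | succ k ih => rw [hstep k (by omega), ih (by omega)]
  refine eq_of_natDegree_lt_card_of_eval_eq (ι := Fin (n + 2)) _ _
    (f := fun i => x i) (hx.comp Fin.val_injective) (fun i => ?_) ?_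
  · simpa using hconst i (by omega)
  · rw [natDegree_C, Fintype.card_fin]
    omega

theorem derivative_eq_of_eval_succ_sub_eq {P Q : R[X]} {n : ℕ} (hP : P.natDegree ≤ n + 1)
    (hQ : Q.natDegree ≤ n + 1) {x : ℕ → R} (hx : Function.Injective x)
    (h : ∀ i ≤ n, P.eval (x (i + 1)) - P.eval (x i) = Q.eval (x (i + 1)) - Q.eval (x i)) :
    derivative P = derivative Q := by
  have hD : (P - Q).natDegree ≤ n + 1 := (natDegree_sub_le _ _).trans (max_le hP hQ)
  have hconst := eq_C_of_eval_succ_eq hD hx fun i hi => by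
    simp only [eval_sub]
    linear_combination h i hi
  rw [← sub_eq_zero, ← derivative_sub, hconst, derivative_C]

theorem integral_eval_derivative (P : ℝ[X]) (c d : ℝ) :
    ∫ x in c..d, (derivative P).eval x = P.eval d - P.eval c :=
  integral_eq_sub_of_hasDerivAt (fun x _ => P.hasDerivAt x)
    ((derivative P).continuous.intervalIntegrable c d)

end Polynomial

theorem integral_eq_sub_of_forall_eq_integral {E : Type*} [NormedAddCommGroup E]
    [NormedSpace ℝ E] {a b : ℝ} {f F : ℝ → E} (hf : IntervalIntegrable f MeasureTheory.volume a b)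
    (hF : ∀ x, F x = ∫ t in a..x, f t) {c d : ℝ} (hc : c ∈ Set.uIcc a b) (hd : d ∈ Set.uIcc a b) :
    ∫ t in c..d, f t = F d - F c := by
  rw [hF, hF]
  exact (integral_interval_sub_left (hf.mono_set (Set.uIcc_subset_uIcc_left hd))
    (hf.mono_set (Set.uIcc_subset_uIcc_left hc))).symm

section UniformGrid

variable (a b : ℝ) (n : ℕ)

noncomputable def uniformNode (i : ℕ) : ℝ := a + i * ((b - a) / (n + 1))

theorem uniformNode_succ (i : ℕ) :
    uniformNode a b n (i + 1) = a + ((i : ℝ) + 1) * ((b - a) / (n + 1)) := by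
  simp [uniformNode]

variable {a b}

theorem uniformNode_injective (hab : a ≠ b) : Function.Injective (uniformNode a b n) := by
  intro i j hij
  have hstep : (b - a) / (n + 1) ≠ 0 := div_ne_zero (sub_ne_zero.2 hab.symm) (by positivity)
  exact_mod_cast mul_right_cancel₀ hstep (add_left_cancel hij)

theorem uniformNode_mem_uIcc {i : ℕ} (hi : i ≤ n + 1) : uniformNode a b n i ∈ Set.uIcc a b := by
  have ht : (i : ℝ) / (n + 1) ∈ Set.Icc (0 : ℝ) 1 :=
    ⟨by positivity, (div_le_one (by positivity)).2 (by exact_mod_cast hi)⟩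
  have hmem := lineMap_mem_segment ℝ a b ht
  rw [segment_eq_uIcc, AffineMap.lineMap_apply_ring'] at hmem
  convert hmem using 1
  simp only [uniformNode]
  ring

end UniformGrid

/-- The average interpolant of `v` on `n+1` equal subintervals of `[a,b]` is the derivative of
the Lagrange interpolant of degree `≤ n+1` of the primitive `V(x) = ∫_a^x v` at the `n+2`
subinterval endpoints. -/
theorem stmt8 (n : ℕ) (a b : ℝ) (hab : a < b) (v : ℝ → ℝ)
    (hv : IntervalIntegrable v MeasureTheory.volume a b)
    (V : ℝ → ℝ) (hV : ∀ x, V x = ∫ t in a..x, v t)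
    (q : Polynomial ℝ) (hqdeg : q.natDegree ≤ n + 1)
    (hq : ∀ i : Fin (n + 2),
      q.eval (a + (i.1 : ℝ) * ((b - a) / (n + 1))) = V (a + (i.1 : ℝ) * ((b - a) / (n + 1))))
    (p : Polynomial ℝ) (hpdeg : p.natDegree ≤ n)
    (hp : ∀ i : Fin (n + 1),
      ∫ x in (a + (i.1 : ℝ) * ((b - a) / (n + 1)))..(a + ((i.1 : ℝ) + 1) * ((b - a) / (n + 1))),
          p.eval x
        = ∫ x in (a + (i.1 : ℝ) * ((b - a) / (n + 1)))..(a + ((i.1 : ℝ) + 1) * ((b - a) / (n + 1))),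
            v x) :
    p = Polynomial.derivative q := by
  set x := uniformNode a b n
  have hP : derivative (antiderivative p) = p := derivative_antiderivative p
  have hincrement : ∀ i ≤ n, (antiderivative p).eval (x (i + 1)) - (antiderivative p).eval (x i)
      = q.eval (x (i + 1)) - q.eval (x i) := by
    intro i hi
    have hq_succ : q.eval (x (i + 1)) = V (x (i + 1)) := hq ⟨i + 1, by omega⟩
    have hq_self : q.eval (x i) = V (x i) := hq ⟨i, by omega⟩
    calc (antiderivative p).eval (x (i + 1)) - (antiderivative p).eval (x i)
        = ∫ t in x i..x (i + 1), p.eval t := by rw [← integral_eval_derivative, hP]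
      _ = ∫ t in x i..x (i + 1), v t := by
          rw [show x (i + 1) = _ from uniformNode_succ a b n i]
          exact hp ⟨i, by omega⟩
      _ = V (x (i + 1)) - V (x i) := integral_eq_sub_of_forall_eq_integral hv hV
          (uniformNode_mem_uIcc n (by omega)) (uniformNode_mem_uIcc n (by omega))
      _ = q.eval (x (i + 1)) - q.eval (x i) := by rw [hq_succ, hq_self]
  calc p = derivative (antiderivative p) := hP.symm
    _ = derivative q := derivative_eq_of_eval_succ_sub_eq
        ((natDegree_antiderivative_le p).trans (Nat.add_le_add_right hpdeg 1)) hqdeg (uniformNode_injective n hab.ne)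
        hincrement
end

section
/- Let Ω ⊆ ℝ^2 be such that near a cell T of side h the membership in Ω is characterized by y ≤ ψ(x) with ψ ∈ C^s([x_T − δ, x_T + δ]), s > 1, ‖ψ‖_{C^s} ≤ M, where δ = C_0 h, and suppose the recovered function is ũ_T = χ_{{y ≤ p_T(x)}} where p_T is the degree-2k average interpolant of ψ on 2k+1 columns of width h. Then ‖χ_Ω − ũ_T‖_{L^1(T)} ≤ C h^{r+1} with r = min{s, 2k+1} and C depending only on M, k. -/
/-!
Near `T` the domain is the subgraph of `ψ`, so `Ω ∆ {y ≤ p(x)}` lies in a strip of half-width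
`sup |ψ - p|` around the graph of `p`, and its area over the column of `T` is at most
`2 h sup |ψ - p|`. Taylor's theorem with Hölder remainder gives a polynomial `q` of degree `2k`
with `|ψ - q| ≤ M (2C₀h)^r` on the stencil. The cell averages of `p - q` are those of `ψ - q`,
hence of size `M (2C₀h)^r`; since a polynomial of degree `2k` is determined by its averages on
`2k+1` unit cells, equivalence of norms on a finite-dimensional space bounds `p - q`, and so
`ψ - p`, by a multiple of the same quantity.
-/

open MeasureTheory Set Polynomial
open scoped Nat

noncomputable def taylorPolynomial (f : ℝ → ℝ) (n : ℕ) (s : Set ℝ) (x₀ : ℝ) : ℝ[X] :=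
  ∑ i ∈ Finset.range (n + 1), C (taylorCoeffWithin f i s x₀) * (X - C x₀) ^ i

theorem eval_taylorPolynomial (f : ℝ → ℝ) (n : ℕ) (s : Set ℝ) (x₀ x : ℝ) :
    (taylorPolynomial f n s x₀).eval x = taylorWithinEval f n s x₀ x := by
  simp only [taylorPolynomial, taylor_within_apply, eval_finsetSum, eval_mul, eval_C, eval_pow,
    eval_sub, eval_X, taylorCoeffWithin, smul_eq_mul]
  exact Finset.sum_congr rfl fun i _ => by ring

theorem natDegree_taylorPolynomial_le (f : ℝ → ℝ) (n : ℕ) (s : Set ℝ) (x₀ : ℝ) :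
    (taylorPolynomial f n s x₀).natDegree ≤ n :=
  natDegree_sum_le_of_forall_le _ _ fun i hi =>
    (natDegree_C_mul_le _ _).trans <| natDegree_pow_le.trans <| by
      rw [natDegree_X_sub_C, mul_one]; exact Nat.lt_succ_iff.mp (Finset.mem_range.mp hi)

theorem taylor_mean_remainder_lagrange_Icc {f : ℝ → ℝ} {a b x : ℝ} {n : ℕ}
    (hf : ContDiffOn ℝ (n + 1) f (Icc a b)) (hx : x ∈ Icc a b) :
    ∃ x' ∈ Icc a x, f x - taylorWithinEval f n (Icc a b) a x =
      iteratedDerivWithin (n + 1) f (Icc a b) x' * (x - a) ^ (n + 1) / (n + 1)! := by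
  rcases eq_or_lt_of_le hx.1 with rfl | hax
  · exact ⟨a, left_mem_Icc.mpr le_rfl, by simp [taylorWithinEval_self]⟩
  have hab : a < b := hax.trans_le hx.2
  have hf' : DifferentiableOn ℝ (iteratedDerivWithin n f (Icc a b)) (Icc a b) :=
    hf.differentiableOn_iteratedDerivWithin (mod_cast n.lt_succ_self) (uniqueDiffOn_Icc hab)
  obtain ⟨y, hy, hcauchy⟩ := exists_ratio_hasDerivAt_eq_ratio_slope
    (fun t => taylorWithinEval f n (Icc a b) t x)
    (fun t => ((n ! : ℝ)⁻¹ * (x - t) ^ n) • iteratedDerivWithin (n + 1) f (Icc a b) t) hax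
    ((continuousOn_taylorWithinEval (uniqueDiffOn_Icc hab) hf.of_succ).mono
      (Icc_subset_Icc_right hx.2))
    (fun t ht => taylorWithinEval_hasDerivAt_Ioo x hab ⟨ht.1, ht.2.trans_le hx.2⟩ hf.of_succ
      (hf'.mono Ioo_subset_Icc_self))
    (fun t => (x - t) ^ (n + 1)) (fun t => (n + 1 : ℕ) * (x - t) ^ n * -1) (by fun_prop)
    (fun t _ => ((hasDerivAt_id t).const_sub x).pow (n + 1))
  refine ⟨y, Ioo_subset_Icc_self hy, ?_⟩
  have hxy : (x - y) ^ n ≠ 0 := pow_ne_zero _ (sub_ne_zero.mpr hy.2.ne')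
  simp only [taylorWithinEval_self, smul_eq_mul, sub_self] at hcauchy
  rw [Nat.factorial_succ]
  push_cast at hcauchy ⊢
  rw [zero_pow n.succ_ne_zero, zero_sub] at hcauchy
  field_simp at hcauchy ⊢
  linear_combination hcauchy

theorem abs_sub_taylorWithinEval_le_of_holder {f : ℝ → ℝ} {a b x M α : ℝ} {n : ℕ}
    (hf : ContDiffOn ℝ (n + 1) f (Icc a b)) (hM : 0 ≤ M) (hα : 0 ≤ α)
    (hholder : ∀ y ∈ Icc a b, |iteratedDerivWithin (n + 1) f (Icc a b) y -
      iteratedDerivWithin (n + 1) f (Icc a b) a| ≤ M * |y - a| ^ α)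
    (hx : x ∈ Icc a b) :
    |f x - taylorWithinEval f (n + 1) (Icc a b) a x| ≤ M * (x - a) ^ ((n + 1 : ℕ) + α) := by
  obtain ⟨y, hy, hlagrange⟩ := taylor_mean_remainder_lagrange_Icc hf hx
  have hxa : 0 ≤ x - a := sub_nonneg.mpr hx.1
  have hremainder : f x - taylorWithinEval f (n + 1) (Icc a b) a x =
      (iteratedDerivWithin (n + 1) f (Icc a b) y - iteratedDerivWithin (n + 1) f (Icc a b) a) *
        ((x - a) ^ (n + 1) / (n + 1)!) := by
    rw [taylorWithinEval_succ, ← sub_sub, hlagrange, smul_eq_mul, Nat.factorial_succ]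
    push_cast
    ring
  have hpow : 0 ≤ (x - a) ^ (n + 1) / (n + 1)! := by positivity
  rw [hremainder, abs_mul, abs_of_nonneg hpow, Real.rpow_add' hxa (by positivity),
    Real.rpow_natCast, mul_comm ((x - a) ^ (n + 1)), ← mul_assoc]
  refine mul_le_mul ((hholder y ⟨hy.1, hy.2.trans hx.2⟩).trans ?_)
    (div_le_self (by positivity) (mod_cast Nat.one_le_iff_ne_zero.mpr (Nat.factorial_ne_zero _)))
    (by positivity) (by positivity)
  rw [abs_of_nonneg (sub_nonneg.mpr hy.1)]
  gcongr
  exacts [sub_nonneg.mpr hy.1, hy.2]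

theorem abs_sub_taylorWithinEval_le_of_abs_iteratedDerivWithin_le {f : ℝ → ℝ} {a b x M : ℝ}
    {n : ℕ} (hf : ContDiffOn ℝ (n + 1) f (Icc a b))
    (hbound : ∀ y ∈ Icc a b, |iteratedDerivWithin (n + 1) f (Icc a b) y| ≤ M)
    (hx : x ∈ Icc a b) :
    |f x - taylorWithinEval f n (Icc a b) a x| ≤ M * (x - a) ^ (n + 1) := by
  have hM : 0 ≤ M := (abs_nonneg _).trans (hbound x hx)
  calc |f x - taylorWithinEval f n (Icc a b) a x| ≤ M * (x - a) ^ (n + 1) / n ! :=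
        taylor_mean_remainder_bound (hx.1.trans hx.2) hf hx hbound
    _ ≤ M * (x - a) ^ (n + 1) :=
        div_le_self (mul_nonneg hM (pow_nonneg (sub_nonneg.mpr hx.1) _))
          (mod_cast Nat.one_le_iff_ne_zero.mpr (Nat.factorial_ne_zero _))

theorem exists_polynomial_abs_sub_le_of_holder {f : ℝ → ℝ} {a b M s : ℝ} (hab : a ≤ b)
    (hs : 1 ≤ s) (d : ℕ) (hf : ContDiffOn ℝ ⌊s⌋₊ f (Icc a b))
    (hbound : ∀ m ≤ ⌊s⌋₊, ∀ x ∈ Icc a b, |iteratedDerivWithin m f (Icc a b) x| ≤ M)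
    (hholder : ∀ x ∈ Icc a b, ∀ y ∈ Icc a b,
      |iteratedDerivWithin ⌊s⌋₊ f (Icc a b) x - iteratedDerivWithin ⌊s⌋₊ f (Icc a b) y| ≤
        M * |x - y| ^ (s - ⌊s⌋₊)) :
    ∃ q : ℝ[X], q.natDegree ≤ d ∧
      ∀ x ∈ Icc a b, |f x - q.eval x| ≤ M * (b - a) ^ min s (d + 1) := by
  have ha : a ∈ Icc a b := left_mem_Icc.mpr hab
  have hM : 0 ≤ M := (abs_nonneg _).trans (hbound 0 (Nat.zero_le _) a ha)
  by_cases hd : d + 1 ≤ ⌊s⌋₊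
  · have hds : ((d + 1 : ℕ) : ℝ) ≤ s :=
      (Nat.cast_le (α := ℝ) |>.mpr hd).trans (Nat.floor_le (by linarith))
    have hmin : min s (d + 1 : ℝ) = (d + 1 : ℕ) := by
      rw [min_eq_right (by exact_mod_cast hds)]
      push_cast; rfl
    refine ⟨taylorPolynomial f d (Icc a b) a, natDegree_taylorPolynomial_le _ _ _ _,
      fun x hx => ?_⟩
    rw [eval_taylorPolynomial, hmin, Real.rpow_natCast]
    refine (abs_sub_taylorWithinEval_le_of_abs_iteratedDerivWithin_le (hf.of_le (mod_cast hd))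
      (hbound (d + 1) hd) hx).trans ?_
    gcongr
    exacts [sub_nonneg.mpr hx.1, hx.2]
  · obtain ⟨n, hn⟩ : ∃ n, ⌊s⌋₊ = n + 1 := Nat.exists_eq_add_of_le' (Nat.le_floor (by simpa))
    have hmin : min s (d + 1 : ℝ) = s := by
      rw [min_eq_left]
      have := Nat.lt_floor_add_one s
      have : (⌊s⌋₊ : ℝ) ≤ d := by exact_mod_cast (by omega : ⌊s⌋₊ ≤ d)
      linarith
    refine ⟨taylorPolynomial f (n + 1) (Icc a b) a,
      (natDegree_taylorPolynomial_le _ _ _ _).trans (by omega), fun x hx => ?_⟩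
    rw [eval_taylorPolynomial, hmin]
    have hf' : ContDiffOn ℝ (n + 1) f (Icc a b) := by rw [hn] at hf; exact_mod_cast hf
    have hα : 0 ≤ s - (n + 1 : ℕ) := by rw [← hn]; exact sub_nonneg.mpr (Nat.floor_le (by linarith))
    calc |f x - taylorWithinEval f (n + 1) (Icc a b) a x|
        ≤ M * (x - a) ^ ((n + 1 : ℕ) + (s - (n + 1 : ℕ))) :=
          abs_sub_taylorWithinEval_le_of_holder hf' hM hα
            (fun y hy => by rw [← hn]; exact hholder y hy a ha) hx
      _ ≤ M * (b - a) ^ s := by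
          rw [add_sub_cancel]; gcongr; exacts [sub_nonneg.mpr hx.1, hx.2]

theorem exists_mem_Ioo_eq_zero_of_intervalIntegral_eq_zero {f : ℝ → ℝ} (hf : Continuous f)
    {l u : ℝ} (hlu : l < u) (h : ∫ x in l..u, f x = 0) : ∃ c ∈ Ioo l u, f c = 0 := by
  have hderiv : ∀ x, HasDerivAt (fun y => ∫ t in l..y, f t) (f x) x := fun x =>
    (hf.integral_hasStrictDerivAt l x).hasDerivAt
  exact exists_hasDerivAt_eq_zero hlu
    (fun x _ => (hderiv x).continuousAt.continuousWithinAt)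
    (by simp [h]) fun x _ => hderiv x

theorem Polynomial.eq_zero_of_forall_intervalIntegral_eq_zero {P : ℝ[X]} {n : ℕ}
    (hP : P.degree < n) (a : ℝ) (h : ∀ j : Fin n, ∫ t in a + j..a + j + 1, P.eval t = 0) :
    P = 0 := by
  choose ξ hξ hroot using fun j : Fin n =>
    exists_mem_Ioo_eq_zero_of_intervalIntegral_eq_zero P.continuous (by linarith) (h j)
  have hinj : InjOn ξ (Finset.univ : Finset (Fin n)) := by
    intro i _ j _ hij
    have hi := hξ i
    have hj := hξ j
    rw [hij] at hi
    have h1 : ((i : ℕ) : ℝ) < (j + 1 : ℕ) := by push_cast; linarith [hi.1, hj.2]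
    have h2 : ((j : ℕ) : ℝ) < (i + 1 : ℕ) := by push_cast; linarith [hi.2, hj.1]
    exact Fin.ext (by have := Nat.cast_lt.mp h1; have := Nat.cast_lt.mp h2; omega)
  exact eq_zero_of_degree_lt_of_eval_index_eq_zero _ hinj (by simpa using hP) fun j _ => hroot j

noncomputable def cellIntegrals (a : ℝ) (n : ℕ) : degreeLT ℝ n →ₗ[ℝ] Fin n → ℝ where
  toFun P j := ∫ t in a + j..a + j + 1, (P : ℝ[X]).eval t
  map_add' P Q := by
    ext j
    simp only [Submodule.coe_add, eval_add, Pi.add_apply]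
    exact intervalIntegral.integral_add (P.1.continuous.intervalIntegrable _ _)
      (Q.1.continuous.intervalIntegrable _ _)
  map_smul' c P := by
    ext j
    simp only [SetLike.val_smul, eval_smul, smul_eq_mul, Pi.smul_apply, RingHom.id_apply]
    exact intervalIntegral.integral_const_mul c _

theorem cellIntegrals_injective (a : ℝ) (n : ℕ) : Function.Injective (cellIntegrals a n) := by
  rw [← LinearMap.ker_eq_bot, LinearMap.ker_eq_bot']
  intro P hP
  exact Subtype.ext <| eq_zero_of_forall_intervalIntegral_eq_zero (mem_degreeLT.mp P.2) a
    fun j => congr_fun hP j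

theorem Polynomial.abs_eval_le_of_abs_coeff_le {P : ℝ[X]} {n : ℕ} (hP : P.natDegree < n)
    {B t : ℝ} (hB : ∀ i < n, |P.coeff i| ≤ B) (ht : |t| ≤ 1) : |P.eval t| ≤ n * B := by
  rw [eval_eq_sum_range' hP]
  calc |∑ i ∈ Finset.range n, P.coeff i * t ^ i|
      ≤ ∑ i ∈ Finset.range n, |P.coeff i * t ^ i| := Finset.abs_sum_le_sum_abs _ _
    _ ≤ ∑ _i ∈ Finset.range n, B := Finset.sum_le_sum fun i hi => by
        rw [abs_mul, abs_pow]
        exact (mul_le_of_le_one_right (abs_nonneg _) (pow_le_one₀ (abs_nonneg t) ht)).trans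
          (hB i (Finset.mem_range.mp hi))
    _ = n * B := by rw [Finset.sum_const, Finset.card_range, nsmul_eq_mul]

theorem exists_abs_eval_le_of_abs_intervalIntegral_le (a : ℝ) (d : ℕ) :
    ∃ Λ > 0, ∀ P : ℝ[X], P.natDegree ≤ d → ∀ E : ℝ,
      (∀ j : Fin (d + 1), |∫ t in a + j..a + j + 1, P.eval t| ≤ E) →
      ∀ t, |t| ≤ 1 → |P.eval t| ≤ Λ * E := by
  let L := cellIntegrals a (d + 1) ∘ₗ (degreeLTEquiv ℝ (d + 1)).symm.toLinearMap
  obtain ⟨K, hK, hanti⟩ := L.injective_iff_antilipschitz.mp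
    ((cellIntegrals_injective a (d + 1)).comp (degreeLTEquiv ℝ (d + 1)).symm.injective)
  refine ⟨(d + 1) * K, by positivity, fun P hP E hE t ht => ?_⟩
  have hE0 : 0 ≤ E := (abs_nonneg _).trans (hE 0)
  have hPmem : P ∈ degreeLT ℝ (d + 1) := mem_degreeLT.mpr <|
    (degree_le_of_natDegree_le hP).trans_lt (Nat.cast_lt.mpr d.lt_succ_self)
  set c := degreeLTEquiv ℝ (d + 1) ⟨P, hPmem⟩
  have hLc : ‖L c‖ ≤ E := by
    refine (pi_norm_le_iff_of_nonneg hE0).mpr fun j => ?_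
    simpa [L, c, cellIntegrals] using hE j
  have hc : ‖c‖ ≤ K * E :=
    (ZeroHomClass.bound_of_antilipschitz L hanti c).trans (by gcongr)
  calc |P.eval t| ≤ ((d + 1 : ℕ) : ℝ) * (K * E) :=
        abs_eval_le_of_abs_coeff_le (Nat.lt_succ_of_le hP)
          (fun i hi => (norm_le_pi_norm c ⟨i, hi⟩).trans hc) ht
    _ = (d + 1) * K * E := by push_cast; ring

theorem abs_intervalIntegral_eval_sub_le {f : ℝ → ℝ} {p q : ℝ[X]} {l u E : ℝ} (hlu : l ≤ u)
    (hf : IntervalIntegrable f volume l u) (hpf : ∫ x in l..u, p.eval x = ∫ x in l..u, f x)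
    (hfq : ∀ x ∈ Icc l u, |f x - q.eval x| ≤ E) :
    |∫ x in l..u, (p - q).eval x| ≤ E * (u - l) := by
  have hq := q.continuous.intervalIntegrable (μ := volume) l u
  simp_rw [eval_sub]
  rw [intervalIntegral.integral_sub (p.continuous.intervalIntegrable _ _) hq, hpf,
    ← intervalIntegral.integral_sub hf hq, ← Real.norm_eq_abs, ← abs_of_nonneg (sub_nonneg.mpr hlu)]
  exact intervalIntegral.norm_integral_le_of_norm_le_const fun x hx =>
    hfq x (uIoc_subset_uIcc.trans (uIcc_of_le hlu).subset hx)

theorem exists_abs_sub_eval_le_of_intervalIntegral_eq (a : ℝ) (d : ℕ) :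
    ∃ Λ > 0, ∀ h : ℝ, 0 < h → ∀ (x₀ E : ℝ) (f : ℝ → ℝ) (p q : ℝ[X]),
      p.natDegree ≤ d → q.natDegree ≤ d →
      (∀ j : Fin (d + 1), IntervalIntegrable f volume (x₀ + h * (a + j)) (x₀ + h * (a + j + 1))) →
      (∀ j : Fin (d + 1), ∫ x in x₀ + h * (a + j)..x₀ + h * (a + j + 1), p.eval x =
        ∫ x in x₀ + h * (a + j)..x₀ + h * (a + j + 1), f x) →
      (∀ j : Fin (d + 1), ∀ x ∈ Icc (x₀ + h * (a + j)) (x₀ + h * (a + j + 1)),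
        |f x - q.eval x| ≤ E) →
      ∀ x, |x - x₀| ≤ h → |f x - q.eval x| ≤ E → |f x - p.eval x| ≤ (1 + Λ) * E := by
  obtain ⟨Λ, hΛ, hstab⟩ := exists_abs_eval_le_of_abs_intervalIntegral_le a d
  refine ⟨Λ, hΛ, fun h hh x₀ E f p q hp hq hf hpf hfq x hx hfqx => ?_⟩
  -- `p - q` pulled back to the reference cells `[a + j, a + j + 1]`
  set P := (p - q).comp (C x₀ + C h * X)
  have hPeval : ∀ t, P.eval t = (p - q).eval (x₀ + h * t) := by simp [P]
  have hPdeg : P.natDegree ≤ d := by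
    rw [natDegree_comp, natDegree_C_add, natDegree_C_mul_X h hh.ne', mul_one]
    exact (natDegree_sub_le p q).trans (max_le hp hq)
  have hPcells : ∀ j : Fin (d + 1), |∫ t in a + j..a + j + 1, P.eval t| ≤ E := fun j => by
    have hcell := abs_intervalIntegral_eval_sub_le (by nlinarith) (hf j) (hpf j) (hfq j)
    simp_rw [hPeval]
    rw [intervalIntegral.integral_comp_add_mul (fun x => (p - q).eval x) hh.ne' x₀, smul_eq_mul,
      abs_mul, abs_inv, abs_of_pos hh, inv_mul_le_iff₀ hh]
    linarith
  have hPx := hstab P hPdeg E hPcells ((x - x₀) / h) (by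
    rw [abs_div, abs_of_pos hh]; exact div_le_one_of_le₀ hx hh.le)
  rw [hPeval, mul_div_cancel₀ _ hh.ne', add_sub_cancel, eval_sub] at hPx
  calc |f x - p.eval x| = |(f x - q.eval x) - (p.eval x - q.eval x)| := by ring_nf
    _ ≤ |f x - q.eval x| + |p.eval x - q.eval x| := abs_sub _ _
    _ ≤ E + Λ * E := add_le_add hfqx hPx
    _ = (1 + Λ) * E := by ring

theorem volume_symmDiff_subgraph_inter_le {f g : ℝ → ℝ} (hf : Measurable f) {α β ε : ℝ}
    (hfg : ∀ x ∈ Icc α β, |g x - f x| < ε) (B : Set ℝ) :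
    volume (symmDiff {z : ℝ × ℝ | z.2 ≤ g z.1} {z | z.2 ≤ f z.1} ∩ (Icc α β ×ˢ B)) ≤
      ENNReal.ofReal (2 * ε) * ENNReal.ofReal (β - α) := by
  calc _ ≤ volume (regionBetween (fun x => f x - ε) (fun x => f x + ε) (Icc α β)) := by
        refine measure_mono ?_
        rintro ⟨x, y⟩ ⟨hxy, hx, -⟩
        have hgf := abs_lt.mp (hfg x hx)
        refine ⟨hx, ?_⟩
        rcases hxy with ⟨h1, h2⟩ | ⟨h1, h2⟩ <;> simp only [mem_ofPred_eq, not_le] at h1 h2 <;>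
          constructor <;> linarith
    _ = _ := by
        rw [Measure.volume_eq_prod, volume_regionBetween_eq_lintegral' (hf.sub_const ε)
          (hf.add_const ε) measurableSet_Icc]
        simp_rw [Pi.sub_apply, add_sub_sub_cancel, ← two_mul]
        rw [setLIntegral_const, Real.volume_Icc]

/-- Local `L¹` error of the AEROS recovery: if near a cell `T` of side `h` the domain `Ω` is the
subgraph `{y ≤ ψ(x)}` of a `C^s` function `ψ` (`s > 1`, `C^s` norm `≤ M`) on
`[x_T − C₀h, x_T + C₀h]`, and `p` is the degree-`2k` average interpolant of `ψ` on the
`2k+1` columns of width `h` centered at `x_T`, then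
`‖χ_Ω − χ_{{y ≤ p(x)}}‖_{L¹(T)} ≤ C h^{r+1}` with `r = min{s, 2k+1}` and `C` depending
only on `M`, `k` (and `s`, `C₀`). -/
theorem stmt12 (M : ℝ) (hM : 0 < M) (k : ℕ) (s : ℝ) (hs : 1 < s)
    (C0 : ℝ) (hC0 : (k : ℝ) + 1 / 2 ≤ C0) :
    ∃ C > (0 : ℝ), ∀ h : ℝ, 0 < h → ∀ xT yT : ℝ, ∀ ψ : ℝ → ℝ,
      ContDiffOn ℝ (⌊s⌋₊) ψ (Set.Icc (xT - C0 * h) (xT + C0 * h)) →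
      (∀ m ≤ ⌊s⌋₊, ∀ x ∈ Set.Icc (xT - C0 * h) (xT + C0 * h),
        |iteratedDerivWithin m ψ (Set.Icc (xT - C0 * h) (xT + C0 * h)) x| ≤ M) →
      (∀ x ∈ Set.Icc (xT - C0 * h) (xT + C0 * h), ∀ y ∈ Set.Icc (xT - C0 * h) (xT + C0 * h),
        |iteratedDerivWithin ⌊s⌋₊ ψ (Set.Icc (xT - C0 * h) (xT + C0 * h)) x -
          iteratedDerivWithin ⌊s⌋₊ ψ (Set.Icc (xT - C0 * h) (xT + C0 * h)) y| ≤
            M * |x - y| ^ (s - ⌊s⌋₊)) →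
      ∀ p : Polynomial ℝ, p.natDegree ≤ 2 * k →
      (∀ j : Fin (2 * k + 1),
        ∫ x in (xT + ((j.1 : ℝ) - k) * h - h / 2)..(xT + ((j.1 : ℝ) - k) * h + h / 2), p.eval x
          = ∫ x in (xT + ((j.1 : ℝ) - k) * h - h / 2)..(xT + ((j.1 : ℝ) - k) * h + h / 2), ψ x) →
      volume (symmDiff {z : ℝ × ℝ | z.2 ≤ ψ z.1} {z : ℝ × ℝ | z.2 ≤ p.eval z.1}
          ∩ (Set.Icc (xT - h / 2) (xT + h / 2) ×ˢ Set.Icc (yT - h / 2) (yT + h / 2)))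
        ≤ ENNReal.ofReal (C * h ^ (min s (2 * (k : ℝ) + 1) + 1)) := by
  obtain ⟨Λ, hΛ, hquasi⟩ :=
    exists_abs_sub_eval_le_of_intervalIntegral_eq (-(k : ℝ) - 1 / 2) (2 * k)
  have hC0pos : 0 < C0 := lt_of_lt_of_le (by positivity) hC0
  set r := min s (2 * (k : ℝ) + 1)
  refine ⟨4 * (1 + Λ) * (M * (2 * C0) ^ r), by positivity, ?_⟩
  intro h hh xT yT ψ hψ hbound hholder p hp hpint
  have hcell : ∀ j : Fin (2 * k + 1), Icc (xT + h * (-(k : ℝ) - 1 / 2 + j))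
      (xT + h * (-(k : ℝ) - 1 / 2 + j + 1)) ⊆ Icc (xT - C0 * h) (xT + C0 * h) := fun j => by
    have hj : ((j : ℕ) : ℝ) + 1 ≤ 2 * k + 1 := by exact_mod_cast j.2
    apply Icc_subset_Icc <;> nlinarith [(Nat.cast_nonneg (j : ℕ) : (0 : ℝ) ≤ j)]
  obtain ⟨q, hq, hψq⟩ := exists_polynomial_abs_sub_le_of_holder (by nlinarith) hs.le (2 * k)
    hψ hbound hholder
  set E := M * ((2 * C0) ^ r * h ^ r)
  have hψq' : ∀ x ∈ Icc (xT - C0 * h) (xT + C0 * h), |ψ x - q.eval x| ≤ E := fun x hx => by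
    convert hψq x hx using 2
    rw [← Real.mul_rpow (by positivity) hh.le,
      show xT + C0 * h - (xT - C0 * h) = 2 * C0 * h by ring]
    push_cast
    rfl
  have hψp : ∀ x ∈ Icc (xT - h / 2) (xT + h / 2), |ψ x - p.eval x| < 2 * ((1 + Λ) * E) := by
    intro x hx
    refine (hquasi h hh xT E ψ p q hp hq
      (fun j => (hψ.continuousOn.mono (hcell j)).intervalIntegrable_of_Icc (by nlinarith))
      (fun j => by convert hpint j using 2 <;> ring) (fun j x hx => hψq' x (hcell j hx)) x
      (abs_le.mpr ⟨by linarith [hx.1], by linarith [hx.2]⟩)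
      (hψq' x (Icc_subset_Icc (by nlinarith) (by nlinarith) hx))).trans_lt
      (lt_two_mul_self (by positivity))
  calc _ ≤ ENNReal.ofReal (2 * (2 * ((1 + Λ) * E))) * ENNReal.ofReal (xT + h / 2 - (xT - h / 2)) :=
        volume_symmDiff_subgraph_inter_le p.continuous.measurable hψp _
    _ = _ := by
        rw [← ENNReal.ofReal_mul (by positivity), Real.rpow_add_one hh.ne']
        congr 1
        ring
end

section
/- Let u = χ_{H_θ} where H_θ = {z : ⟨z − z_0, e_θ⟩ ≤ 0} is a half-plane through a point z_0 in the central cell of a 3×3 grid of unit cells, with inner normal e_θ = (−sin θ, cos θ). Define the Sobel responses H_T = 2a_{1,0} + a_{1,1} + a_{1,−1} − 2a_{−1,0} − a_{−1,1} − a_{−1,−1} and V_T = 2a_{0,1} + a_{1,1} + a_{−1,1} − 2a_{0,−1} − a_{1,−1} − a_{−1,−1}, where a_{i,j} are the cell averages of u. Then V_T > 0 if and only if θ ∈ (π/2, 3π/2), and V_T < 0 if and only if θ ∈ [0, π/2) ∪ (3π/2, 2π). -/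
/-!
Translating the upper row of cells down by two turns `a i 1` into the area of the sublevel set
`{⟨z - z₀, e⟩ ≤ -2 e₂}` inside `T_{i,-1}`, while `a i (-1)` is the area of `{⟨z - z₀, e⟩ ≤ 0}`
inside the same cell. Hence every column difference `a i 1 - a i (-1)` has weakly the sign of
`-e₂ = -cos θ`, strictly so in the central column because `z₀` lies in the central cell. So
`sign V = -sign (cos θ)`, and it remains to read off the sign of the cosine on `[0, 2π)`.
-/

open MeasureTheory

/-- The unit cell `T_{i,j}` of a 3×3 grid of unit squares centered at the origin. -/
def unitCell (i j : ℤ) : Set (ℝ × ℝ) :=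
  Set.Icc ((i : ℝ) - 1 / 2) ((i : ℝ) + 1 / 2) ×ˢ Set.Icc ((j : ℝ) - 1 / 2) ((j : ℝ) + 1 / 2)

open Set Real
open scoped ENNReal

section Sublevel

variable {X : Type*} [MeasurableSpace X] {μ : Measure X} {φ : X → ℝ} {K : Set X} {s t : ℝ}

lemma measureReal_sublevel_inter_mono (hK : μ K ≠ ∞) (hst : s ≤ t) :
    μ.real ({x | φ x ≤ s} ∩ K) ≤ μ.real ({x | φ x ≤ t} ∩ K) :=
  measureReal_mono (inter_subset_inter_left K fun _ hx => le_trans hx hst)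
    (measure_ne_top_of_subset inter_subset_right hK)

lemma measureReal_sublevel_inter_lt [TopologicalSpace X] [OpensMeasurableSpace X]
    [μ.IsOpenPosMeasure] (hφ : Continuous φ) (hK : μ K ≠ ∞) {p : X}
    (hp : p ∈ closure (interior K)) (hs : s < φ p) (ht : φ p < t) :
    μ.real ({x | φ x ≤ s} ∩ K) < μ.real ({x | φ x ≤ t} ∩ K) := by
  set U := φ ⁻¹' Ioo s t ∩ interior K
  have hU : IsOpen U := (isOpen_Ioo.preimage hφ).inter isOpen_interior
  have hUne : U.Nonempty := mem_closure_iff.1 hp _ (isOpen_Ioo.preimage hφ) ⟨hs, ht⟩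
  have hUK : U ⊆ K := inter_subset_right.trans interior_subset
  have hfin : ∀ {A}, A ⊆ K → μ A ≠ ∞ := fun hA => measure_ne_top_of_subset hA hK
  have hdisj : Disjoint ({x | φ x ≤ s} ∩ K) U :=
    disjoint_left.2 fun _ hx hxU => (hxU.1.1).not_ge hx.1
  have hsub : {x | φ x ≤ s} ∩ K ∪ U ⊆ {x | φ x ≤ t} ∩ K :=
    union_subset (inter_subset_inter_left K fun _ hx => le_trans hx (hs.trans ht).le)
      fun _ hx => ⟨hx.1.2.le, hUK hx⟩
  calc μ.real ({x | φ x ≤ s} ∩ K)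
      < μ.real ({x | φ x ≤ s} ∩ K) + μ.real U :=
        lt_add_of_pos_right _ <| ENNReal.toReal_pos (hU.measure_pos μ hUne).ne' (hfin hUK)
    _ = μ.real ({x | φ x ≤ s} ∩ K ∪ U) :=
        (measureReal_union hdisj hU.measurableSet (hfin inter_subset_right) (hfin hUK)).symm
    _ ≤ μ.real ({x | φ x ≤ t} ∩ K) := measureReal_mono hsub (hfin inter_subset_right)

end Sublevel

lemma closure_interior_unitCell (i j : ℤ) : closure (interior (unitCell i j)) = unitCell i j := by
  simp only [unitCell, interior_prod_eq, interior_Icc, closure_prod_eq]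
  rw [closure_Ioo (by intro h; linarith), closure_Ioo (by intro h; linarith)]

lemma volume_unitCell_ne_top (i j : ℤ) : volume (unitCell i j) ≠ ∞ :=
  (isCompact_Icc.prod isCompact_Icc).measure_lt_top.ne

lemma preimage_const_add_unitCell (i j m n : ℤ) :
    ((((m : ℝ), (n : ℝ)) + ·) ⁻¹' unitCell (i + m) (j + n)) = unitCell i j := by
  ext z
  simp only [unitCell, mem_preimage, mem_prod, mem_Icc, Prod.fst_add, Prod.snd_add, Int.cast_add]
  constructor <;> rintro ⟨⟨_, _⟩, _, _⟩ <;> refine ⟨⟨?_, ?_⟩, ?_, ?_⟩ <;> linarith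

lemma volume_inter_unitCell_add (S : Set (ℝ × ℝ)) (i j m n : ℤ) :
    volume (S ∩ unitCell (i + m) (j + n)) =
      volume (((((m : ℝ), (n : ℝ)) + ·) ⁻¹' S) ∩ unitCell i j) := by
  rw [← measure_preimage_add volume ((m : ℝ), (n : ℝ)), preimage_inter,
    preimage_const_add_unitCell]

def offsetAlong (z0 e z : ℝ × ℝ) : ℝ := (z.1 - z0.1) * e.1 + (z.2 - z0.2) * e.2

lemma continuous_offsetAlong (z0 e : ℝ × ℝ) : Continuous (offsetAlong z0 e) := by
  unfold offsetAlong; fun_prop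

lemma offsetAlong_const_add (z0 e v z : ℝ × ℝ) :
    offsetAlong z0 e (v + z) = offsetAlong z0 e z + (v.1 * e.1 + v.2 * e.2) := by
  simp only [offsetAlong, Prod.fst_add, Prod.snd_add]; ring

lemma volume_halfPlane_inter_unitCell_one (z0 e : ℝ × ℝ) (i : ℤ) :
    volume.real ({z | offsetAlong z0 e z ≤ 0} ∩ unitCell i 1) =
      volume.real ({z | offsetAlong z0 e z ≤ -(2 * e.2)} ∩ unitCell i (-1)) := by
  have h := volume_inter_unitCell_add {z | offsetAlong z0 e z ≤ 0} i (-1) 0 2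
  rw [add_zero, show (-1 : ℤ) + 2 = 1 by norm_num] at h
  have hshift : ((((0 : ℤ) : ℝ), ((2 : ℤ) : ℝ)) + ·) ⁻¹' {z | offsetAlong z0 e z ≤ 0} =
      {z | offsetAlong z0 e z ≤ -(2 * e.2)} := by
    ext z
    simp only [mem_preimage, mem_ofPred_eq, offsetAlong_const_add]
    push_cast
    constructor <;> intro hz <;> linarith
  rw [Measure.real, h, hshift, Measure.real]

def sobelV (a : ℤ → ℤ → ℝ) : ℝ :=
  2 * a 0 1 + a 1 1 + a (-1) 1 - 2 * a 0 (-1) - a 1 (-1) - a (-1) (-1)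

lemma sobelV_eq_sum_columns (a : ℤ → ℤ → ℝ) :
    sobelV a = (a (-1) 1 - a (-1) (-1)) + 2 * (a 0 1 - a 0 (-1)) + (a 1 1 - a 1 (-1)) := by
  unfold sobelV; ring

theorem sign_sobelV_halfPlane (z0 : ℝ × ℝ) (hz0 : z0 ∈ unitCell 0 0) (e : ℝ × ℝ) :
    SignType.sign (sobelV fun i j => volume.real ({z | offsetAlong z0 e z ≤ 0} ∩ unitCell i j)) =
      -SignType.sign e.2 := by
  set F : ℤ → ℝ → ℝ := fun i t => volume.real ({z | offsetAlong z0 e z ≤ t} ∩ unitCell i (-1))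
  rw [sobelV_eq_sum_columns]
  simp only [volume_halfPlane_inter_unitCell_one]
  change SignType.sign ((F (-1) (-(2 * e.2)) - F (-1) 0) + 2 * (F 0 (-(2 * e.2)) - F 0 0)
    + (F 1 (-(2 * e.2)) - F 1 0)) = _
  have hmono : ∀ i {s t : ℝ}, s ≤ t → F i s ≤ F i t := fun i _ _ =>
    measureReal_sublevel_inter_mono (volume_unitCell_ne_top i (-1))
  have hp : (z0.1, (-1 : ℝ)) ∈ closure (interior (unitCell 0 (-1))) := by
    rw [closure_interior_unitCell]
    simp only [unitCell, mem_prod, mem_Icc, Int.cast_zero, Int.cast_neg, Int.cast_one] at hz0 ⊢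
    refine ⟨hz0.1, ?_, ?_⟩ <;> norm_num
  have hstrict : ∀ {s t : ℝ}, s < offsetAlong z0 e (z0.1, -1) → offsetAlong z0 e (z0.1, -1) < t →
      F 0 s < F 0 t := fun hs ht =>
    measureReal_sublevel_inter_lt (continuous_offsetAlong z0 e) (volume_unitCell_ne_top 0 (-1))
      hp hs ht
  -- The point `(z0.1, -1)` separates the two sublevel sets: its offset `(-1 - z0.2) * e.2`
  -- lies strictly between `-2 * e.2` and `0`.
  have hpval : offsetAlong z0 e (z0.1, -1) = (-1 - z0.2) * e.2 := by simp [offsetAlong]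
  have hy : -1 / 2 ≤ z0.2 ∧ z0.2 ≤ 1 / 2 := by
    simp only [unitCell, mem_prod, mem_Icc, Int.cast_zero] at hz0; constructor <;> linarith
  rcases lt_trichotomy e.2 0 with hc | hc | hc
  · have := hstrict (s := 0) (t := -(2 * e.2)) (by rw [hpval]; nlinarith) (by rw [hpval]; nlinarith)
    have := hmono (-1) (s := 0) (t := -(2 * e.2)) (by linarith)
    have := hmono 1 (s := 0) (t := -(2 * e.2)) (by linarith)
    rw [sign_neg hc, sign_pos (by linarith), neg_neg]
  · simp [hc]
  · have := hstrict (s := -(2 * e.2)) (t := 0) (by rw [hpval]; nlinarith) (by rw [hpval]; nlinarith)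
    have := hmono (-1) (s := -(2 * e.2)) (t := 0) (by linarith)
    have := hmono 1 (s := -(2 * e.2)) (t := 0) (by linarith)
    rw [sign_pos hc, sign_neg (by linarith)]

lemma cos_neg_iff_of_mem_Ico {θ : ℝ} (hθ : θ ∈ Ico 0 (2 * π)) :
    cos θ < 0 ↔ θ ∈ Ioo (π / 2) (3 * π / 2) := by
  refine ⟨fun hc => ⟨?_, ?_⟩, fun h => cos_neg_of_pi_div_two_lt_of_lt h.1 (by linarith [h.2])⟩
  · by_contra! h
    exact hc.not_ge (cos_nonneg_of_mem_Icc ⟨by linarith [hθ.1, pi_pos], h⟩)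
  · by_contra! h
    rw [← cos_sub_two_pi] at hc
    exact hc.not_ge (cos_nonneg_of_mem_Icc ⟨by linarith, by linarith [hθ.2, pi_pos]⟩)

lemma cos_pos_iff_of_mem_Ico {θ : ℝ} (hθ : θ ∈ Ico 0 (2 * π)) :
    0 < cos θ ↔ θ ∈ Ico 0 (π / 2) ∪ Ioo (3 * π / 2) (2 * π) := by
  constructor
  · intro hc
    by_contra! h
    simp only [mem_union, mem_Ico, mem_Ioo, not_or, not_and, not_lt] at h
    exact hc.not_ge (cos_nonpos_of_pi_div_two_le_of_le (h.1 hθ.1) (by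
      by_contra! h'; linarith [h.2 (by linarith), hθ.2]))
  · rintro (h | h)
    · exact cos_pos_of_mem_Ioo ⟨by linarith [pi_pos, h.1], h.2⟩
    · rw [← cos_sub_two_pi]
      exact cos_pos_of_mem_Ioo ⟨by linarith [h.1], by linarith [pi_pos, h.2]⟩

/-- Sign of the vertical Sobel response for a half-plane interface through the central cell:
for `u = χ_{H_θ}` with `H_θ = {⟨z − z₀, e_θ⟩ ≤ 0}`, `e_θ = (−sin θ, cos θ)`, `z₀` in the
central unit cell, the Sobel response `V_T` satisfies `V_T > 0 ↔ θ ∈ (π/2, 3π/2)` and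
`V_T < 0 ↔ θ ∈ [0, π/2) ∪ (3π/2, 2π)`. -/
theorem stmt17 (z0 : ℝ × ℝ) (hz0 : z0 ∈ unitCell 0 0)
    (θ : ℝ) (hθ : θ ∈ Set.Ico 0 (2 * Real.pi)) :
    let H : Set (ℝ × ℝ) :=
      {z : ℝ × ℝ | (z.1 - z0.1) * (-Real.sin θ) + (z.2 - z0.2) * Real.cos θ ≤ 0}
    let a : ℤ → ℤ → ℝ := fun i j => (volume (H ∩ unitCell i j)).toReal
    let V : ℝ := 2 * a 0 1 + a 1 1 + a (-1) 1 - 2 * a 0 (-1) - a 1 (-1) - a (-1) (-1)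
    (0 < V ↔ θ ∈ Set.Ioo (Real.pi / 2) (3 * Real.pi / 2)) ∧
    (V < 0 ↔ θ ∈ Set.Ico 0 (Real.pi / 2) ∪ Set.Ioo (3 * Real.pi / 2) (2 * Real.pi)) := by
  intro H a V
  have hV : SignType.sign V = -SignType.sign (cos θ) :=
    sign_sobelV_halfPlane z0 hz0 (-sin θ, cos θ)
  rw [← cos_neg_iff_of_mem_Ico hθ, ← cos_pos_iff_of_mem_Ico hθ]
  constructor
  · rw [← sign_eq_one_iff, hV, neg_eq_iff_eq_neg, sign_eq_neg_one_iff]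
  · rw [← sign_eq_neg_one_iff, hV, neg_inj, sign_eq_one_iff]
end
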